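/- arXiv:1710.08350 — 5 statements merged into one kernel-verified Lean document; each statement's English description precedes it below -/
import Mathlib

section
/- Coinduction principle (Theorem on coinduction): for all polynomials p, q ∈ ℝ[x], p ∼_Φ q if and only if p(x(t)) = q(x(t)) for all t ∈ D. -/
open MvPolynomial

/-- The Lie derivative of a polynomial along the polynomial vector field `F`. -/
noncomputable def lieDeriv {N : ℕ} (F : Fin N → MvPolynomial (Fin N) ℝ)
    (p : MvPolynomial (Fin N) ℝ) : MvPolynomial (Fin N) ℝ :=
  ∑ i, pderiv i p * F i

/-- `R` is an 𝓛-bisimulation for the initial value problem `Φ = (F, v₀)`. -/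
def IsLBisim {N : ℕ} (F : Fin N → MvPolynomial (Fin N) ℝ) (v₀ : Fin N → ℝ)
    (R : MvPolynomial (Fin N) ℝ → MvPolynomial (Fin N) ℝ → Prop) : Prop :=
  ∀ p q, R p q → eval v₀ p = eval v₀ q ∧ R (lieDeriv F p) (lieDeriv F q)

/-- `p ∼_Φ q`: the polynomials are related by some 𝓛-bisimulation. -/
def LBisimilar {N : ℕ} (F : Fin N → MvPolynomial (Fin N) ℝ) (v₀ : Fin N → ℝ)
    (p q : MvPolynomial (Fin N) ℝ) : Prop :=
  ∃ R, IsLBisim F v₀ R ∧ R p q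

/-!
Along a solution, `d/dt p(x(t)) = (𝓛 p)(x(t))`, so the `n`-th derivative of `t ↦ p(x(t))` is
`(𝓛⁽ⁿ⁾ p)(x(t))`. A bisimulation relating `p` and `q` forces `𝓛⁽ⁿ⁾ p` and `𝓛⁽ⁿ⁾ q` to agree at
`v₀ = x(0)` for every `n`; the two analytic functions `t ↦ p(x(t))`, `t ↦ q(x(t))` then have the
same Taylor series at `0`, hence coincide on the interval `D`. Conversely, agreement on `D` is
preserved by differentiation on the open set `D`, so it is itself a bisimulation.
-/

theorem AnalyticAt.eventuallyEq_of_iteratedDeriv_eq {𝕜 E : Type*} [NontriviallyNormedField 𝕜]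
    [CharZero 𝕜] [NormedAddCommGroup E] [NormedSpace 𝕜 E] [CompleteSpace E] {f g : 𝕜 → E}
    {z : 𝕜} (hf : AnalyticAt 𝕜 f z) (hg : AnalyticAt 𝕜 g z)
    (h : ∀ n, iteratedDeriv n f z = iteratedDeriv n g z) : f =ᶠ[nhds z] g := by
  have hfg : analyticOrderAt (f - g) z = ⊤ :=
    ENat.eq_top_iff_forall_ge.2 fun n =>
      (natCast_le_analyticOrderAt_iff_iteratedDeriv_eq_zero (hf.sub hg)).2 fun i _ => by
        rw [iteratedDeriv_sub hf.contDiffAt hg.contDiffAt, h, sub_self]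
  filter_upwards [analyticOrderAt_eq_top.1 hfg] with w hw
  exact sub_eq_zero.1 hw

section LieDeriv

variable {N : ℕ} (F : Fin N → MvPolynomial (Fin N) ℝ)

lemma lieDeriv_C (a : ℝ) : lieDeriv F (C a) = 0 := by
  simp [lieDeriv]

lemma lieDeriv_add (p q : MvPolynomial (Fin N) ℝ) :
    lieDeriv F (p + q) = lieDeriv F p + lieDeriv F q := by
  simp [lieDeriv, add_mul, Finset.sum_add_distrib]

lemma lieDeriv_mul_X (p : MvPolynomial (Fin N) ℝ) (i : Fin N) :
    lieDeriv F (p * X i) = lieDeriv F p * X i + p * F i := by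
  simp only [lieDeriv, pderiv_mul, add_mul, Finset.sum_add_distrib, Finset.sum_mul]
  congr 1
  · exact Finset.sum_congr rfl fun j _ => by ring
  · simp [pderiv_X, Pi.single_apply]

end LieDeriv

theorem IsLBisim.eval_iterate_lieDeriv_eq {N : ℕ} {F : Fin N → MvPolynomial (Fin N) ℝ}
    {v₀ : Fin N → ℝ} {R : MvPolynomial (Fin N) ℝ → MvPolynomial (Fin N) ℝ → Prop}
    (hR : IsLBisim F v₀ R) {p q : MvPolynomial (Fin N) ℝ} (hpq : R p q) (n : ℕ) :
    eval v₀ ((lieDeriv F)^[n] p) = eval v₀ ((lieDeriv F)^[n] q) := by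
  suffices R ((lieDeriv F)^[n] p) ((lieDeriv F)^[n] q) from (hR _ _ this).1
  induction n with
  | zero => exact hpq
  | succ n ih =>
    rw [Function.iterate_succ_apply', Function.iterate_succ_apply']
    exact (hR _ _ ih).2

section Trajectory

variable {N : ℕ} {F : Fin N → MvPolynomial (Fin N) ℝ} {v₀ : Fin N → ℝ} {x : ℝ → Fin N → ℝ}

theorem HasDerivAt.eval_mvPolynomial {t : ℝ}
    (hx : HasDerivAt x (fun i => eval (x t) (F i)) t) (r : MvPolynomial (Fin N) ℝ) :
    HasDerivAt (fun s => eval (x s) r) (eval (x t) (lieDeriv F r)) t := by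
  induction r using MvPolynomial.induction_on with
  | C a => simpa [lieDeriv_C] using hasDerivAt_const t a
  | add p q hp hq => simpa [lieDeriv_add] using hp.fun_add hq
  | mul_X p i hp =>
    simpa [lieDeriv_mul_X, mul_comm] using hp.fun_mul (hasDerivAt_pi.1 hx i)

variable {D : Set ℝ} (hD : IsOpen D) (hsol : ∀ t ∈ D, HasDerivAt x (fun i => eval (x t) (F i)) t)
include hD hsol

theorem eqOn_iteratedDeriv_eval_solution (r : MvPolynomial (Fin N) ℝ) (n : ℕ) :
    D.EqOn (iteratedDeriv n fun s => eval (x s) r) (fun s => eval (x s) ((lieDeriv F)^[n] r)) := by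
  induction n with
  | zero => intro t _; simp
  | succ n ih =>
    intro t ht
    rw [iteratedDeriv_succ, ih.deriv hD ht, Function.iterate_succ_apply']
    exact ((hsol t ht).eval_mvPolynomial _).deriv

theorem isLBisim_eqOn_solution (hx0 : x 0 = v₀) (h0 : (0 : ℝ) ∈ D) :
    IsLBisim F v₀ fun a b => D.EqOn (fun t => eval (x t) a) (fun t => eval (x t) b) := by
  intro a b hab
  refine ⟨hx0 ▸ hab h0, fun t ht => ?_⟩
  have hderiv (r : MvPolynomial (Fin N) ℝ) :
      deriv (fun s => eval (x s) r) t = eval (x t) (lieDeriv F r) :=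
    ((hsol t ht).eval_mvPolynomial r).deriv
  simpa only [hderiv] using hab.deriv hD ht

end Trajectory

theorem stmt1_general
    (N : ℕ)
    (F : Fin N → MvPolynomial (Fin N) ℝ) (v₀ : Fin N → ℝ)
    (D : Set ℝ) (hD : IsOpen D) (hDc : D.OrdConnected) (h0 : (0 : ℝ) ∈ D)
    (x : ℝ → Fin N → ℝ)
    (hsol : ∀ t ∈ D, HasDerivAt x (fun i => eval (x t) (F i)) t)
    (hx0 : x 0 = v₀)
    (han : ∀ i, AnalyticOnNhd ℝ (fun t => x t i) D)
    (p q : MvPolynomial (Fin N) ℝ) :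
    LBisimilar F v₀ p q ↔ ∀ t ∈ D, eval (x t) p = eval (x t) q := by
  refine ⟨fun ⟨R, hR, hpq⟩ => ?_, fun h => ⟨_, isLBisim_eqOn_solution hD hsol hx0 h0, h⟩⟩
  have hanalytic (r : MvPolynomial (Fin N) ℝ) : AnalyticOnNhd ℝ (fun t => eval (x t) r) D := by
    simpa [coe_aeval_eq_eval] using AnalyticOnNhd.aeval_mvPolynomial han r
  have hderiv (n : ℕ) : iteratedDeriv n (fun t => eval (x t) p) 0 =
      iteratedDeriv n (fun t => eval (x t) q) 0 := by
    rw [eqOn_iteratedDeriv_eval_solution hD hsol p n h0,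
      eqOn_iteratedDeriv_eval_solution hD hsol q n h0]
    simpa only [hx0] using hR.eval_iterate_lieDeriv_eq hpq n
  exact (hanalytic p).eqOn_of_preconnected_of_eventuallyEq (hanalytic q) hDc.isPreconnected h0
    ((hanalytic p 0 h0).eventuallyEq_of_iteratedDeriv_eq (hanalytic q 0 h0) hderiv)

/-- coinduction: `p ∼_Φ q` iff `p(x(t)) = q(x(t))` for all `t ∈ D`. -/
theorem stmt1
    (N : ℕ) (hN : 1 ≤ N)
    (F : Fin N → MvPolynomial (Fin N) ℝ) (v₀ : Fin N → ℝ)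
    (D : Set ℝ) (hD : IsOpen D) (hDc : D.OrdConnected) (h0 : (0 : ℝ) ∈ D)
    (x : ℝ → Fin N → ℝ)
    (hsol : ∀ t ∈ D, HasDerivAt x (fun i => eval (x t) (F i)) t)
    (hx0 : x 0 = v₀)
    (han : ∀ i, AnalyticOnNhd ℝ (fun t => x t i) D)
    (p q : MvPolynomial (Fin N) ℝ) :
    LBisimilar F v₀ p q ↔ ∀ t ∈ D, eval (x t) p = eval (x t) q :=
  stmt1_general N F v₀ D hD hDc h0 x hsol hx0 han p q
end

section
/- Given a binary relation R on ℝ[x], define the relation R̂ by: p R̂ q if and only if there exist m ≥ 0 and polynomials h_i, p_i, q_i (i = 1,…,m) such that p = ∑_{i=1}^m h_i·p_i, q = ∑_{i=1}^m h_i·q_i, and p_i R q_i for each i. Suppose R is an 𝓛-bisimulation up to, i.e. p R q implies p(v₀) = q(v₀) and 𝓛(p) R̂ 𝓛(q). Then R̂ is an 𝓛-bisimulation for Φ; consequently p R q implies p ∼_Φ q. -/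
/-!
`R̂` is closed under sums and under multiplication by arbitrary polynomials, and `R ⊆ R̂`.
Since `𝓛` is a derivation, `𝓛 (∑ hᵢ pᵢ) = ∑ (𝓛 hᵢ) pᵢ + hᵢ 𝓛 pᵢ`: the first summands are
related by `R̂` because `pᵢ R qᵢ`, the second because `𝓛 pᵢ R̂ 𝓛 qᵢ`. Evaluation at `v₀` is a
ring homomorphism, so it also agrees on `R̂`-related polynomials.
-/

open MvPolynomial

def UpToClosure {N : ℕ}
    (R : MvPolynomial (Fin N) ℝ → MvPolynomial (Fin N) ℝ → Prop)
    (p q : MvPolynomial (Fin N) ℝ) : Prop :=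
  ∃ (m : ℕ) (h p' q' : Fin m → MvPolynomial (Fin N) ℝ),
    p = ∑ i, h i * p' i ∧ q = ∑ i, h i * q' i ∧ ∀ i, R (p' i) (q' i)

section LieDeriv

variable {N : ℕ} (F : Fin N → MvPolynomial (Fin N) ℝ)

theorem lieDeriv_mul (a b : MvPolynomial (Fin N) ℝ) :
    lieDeriv F (a * b) = lieDeriv F a * b + a * lieDeriv F b := by
  simp only [lieDeriv, pderiv_mul, add_mul, Finset.sum_add_distrib,
    Finset.sum_mul, Finset.mul_sum, mul_assoc, mul_comm b]

theorem lieDeriv_sum {ι : Type*} (s : Finset ι) (f : ι → MvPolynomial (Fin N) ℝ) :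
    lieDeriv F (∑ i ∈ s, f i) = ∑ i ∈ s, lieDeriv F (f i) := by
  simp only [lieDeriv, map_sum, Finset.sum_mul]
  exact Finset.sum_comm

end LieDeriv

namespace UpToClosure

variable {N : ℕ} {R : MvPolynomial (Fin N) ℝ → MvPolynomial (Fin N) ℝ → Prop}
  {p q : MvPolynomial (Fin N) ℝ}

theorem of_rel (h : R p q) : UpToClosure R p q :=
  ⟨1, fun _ => 1, fun _ => p, fun _ => q, by simp, by simp, fun _ => h⟩

theorem zero : UpToClosure R 0 0 :=
  ⟨0, Fin.elim0, Fin.elim0, Fin.elim0, by simp, by simp, fun i => i.elim0⟩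

theorem add {p₂ q₂ : MvPolynomial (Fin N) ℝ} (h₁ : UpToClosure R p q)
    (h₂ : UpToClosure R p₂ q₂) : UpToClosure R (p + p₂) (q + q₂) := by
  obtain ⟨m, h, p', q', rfl, rfl, hR⟩ := h₁
  obtain ⟨n, h₂, p₂', q₂', rfl, rfl, hR₂⟩ := h₂
  refine ⟨m + n, Fin.append h h₂, Fin.append p' p₂', Fin.append q' q₂', ?_, ?_, ?_⟩
  · simp [Fin.sum_univ_add]
  · simp [Fin.sum_univ_add]
  · exact Fin.addCases (by simpa using hR) (by simpa using hR₂)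

theorem mul_left (c : MvPolynomial (Fin N) ℝ) (h : UpToClosure R p q) :
    UpToClosure R (c * p) (c * q) := by
  obtain ⟨m, h, p', q', rfl, rfl, hR⟩ := h
  exact ⟨m, fun i => c * h i, p', q', by simp [Finset.mul_sum, mul_assoc],
    by simp [Finset.mul_sum, mul_assoc], hR⟩

theorem sum {ι : Type*} (s : Finset ι) {f g : ι → MvPolynomial (Fin N) ℝ}
    (h : ∀ i ∈ s, UpToClosure R (f i) (g i)) :
    UpToClosure R (∑ i ∈ s, f i) (∑ i ∈ s, g i) := by
  induction s using Finset.cons_induction with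
  | empty => simpa using zero
  | cons a s ha ih =>
    rw [Finset.sum_cons, Finset.sum_cons]
    exact add (h a (by simp)) (ih fun i hi => h i (by simp [hi]))

theorem eval_eq (v₀ : Fin N → ℝ) (hR : ∀ p q, R p q → eval v₀ p = eval v₀ q)
    (h : UpToClosure R p q) : eval v₀ p = eval v₀ q := by
  obtain ⟨m, h, p', q', rfl, rfl, hpq⟩ := h
  simp only [map_sum, map_mul, hR _ _ (hpq _)]

theorem lieDeriv (F : Fin N → MvPolynomial (Fin N) ℝ)
    (hR : ∀ p q, R p q → UpToClosure R (lieDeriv F p) (lieDeriv F q))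
    (h : UpToClosure R p q) : UpToClosure R (lieDeriv F p) (lieDeriv F q) := by
  obtain ⟨m, h, p', q', rfl, rfl, hpq⟩ := h
  rw [lieDeriv_sum, lieDeriv_sum]
  refine sum _ fun i _ => ?_
  rw [lieDeriv_mul, lieDeriv_mul]
  exact add (mul_left _ (of_rel (hpq i))) (mul_left _ (hR _ _ (hpq i)))

end UpToClosure

theorem isLBisim_upToClosure {N : ℕ} (F : Fin N → MvPolynomial (Fin N) ℝ) (v₀ : Fin N → ℝ)
    {R : MvPolynomial (Fin N) ℝ → MvPolynomial (Fin N) ℝ → Prop}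
    (hR : ∀ p q, R p q → eval v₀ p = eval v₀ q ∧ UpToClosure R (lieDeriv F p) (lieDeriv F q)) :
    IsLBisim F v₀ (UpToClosure R) := fun _ _ h =>
  ⟨h.eval_eq v₀ fun p q hpq => (hR p q hpq).1, h.lieDeriv F fun p q hpq => (hR p q hpq).2⟩

theorem stmt2_general
    (N : ℕ)
    (F : Fin N → MvPolynomial (Fin N) ℝ) (v₀ : Fin N → ℝ)
    (R : MvPolynomial (Fin N) ℝ → MvPolynomial (Fin N) ℝ → Prop)
    (hupto : ∀ p q, R p q →
      eval v₀ p = eval v₀ q ∧ UpToClosure R (lieDeriv F p) (lieDeriv F q)) :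
    IsLBisim F v₀ (UpToClosure R) ∧ ∀ p q, R p q → LBisimilar F v₀ p q :=
  ⟨isLBisim_upToClosure F v₀ hupto,
    fun _ _ hpq => ⟨UpToClosure R, isLBisim_upToClosure F v₀ hupto, .of_rel hpq⟩⟩

/-- if `R` is an 𝓛-bisimulation up to, then `R̂` is an 𝓛-bisimulation;
consequently `p R q` implies `p ∼_Φ q`. -/
theorem stmt2
    (N : ℕ) (hN : 1 ≤ N)
    (F : Fin N → MvPolynomial (Fin N) ℝ) (v₀ : Fin N → ℝ)
    (R : MvPolynomial (Fin N) ℝ → MvPolynomial (Fin N) ℝ → Prop)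
    (hupto : ∀ p q, R p q →
      eval v₀ p = eval v₀ q ∧ UpToClosure R (lieDeriv F p) (lieDeriv F q)) :
    IsLBisim F v₀ (UpToClosure R) ∧ ∀ p q, R p q → LBisimilar F v₀ p q :=
  stmt2_general N F v₀ R hupto
end

section
/- If R is an 𝓛-bisimulation for Φ, then the ideal of ℝ[x] generated by the kernel ker(R) = {p − q : p R q} is a Φ-invariant. -/
open MvPolynomial

/-- `I` is a `Φ`-invariant ideal: every element vanishes at `v₀` and `I` is closed
under Lie derivation. -/
def IsInvariantIdeal {N : ℕ} (F : Fin N → MvPolynomial (Fin N) ℝ) (v₀ : Fin N → ℝ)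
    (I : Ideal (MvPolynomial (Fin N) ℝ)) : Prop :=
  (∀ p ∈ I, eval v₀ p = 0) ∧ ∀ p ∈ I, lieDeriv F p ∈ I

/-!
The Lie derivative `𝓛 = ∑ᵢ fᵢ ∂ᵢ` is a derivation, and by the Leibniz rule a derivation
preserves the ideal generated by a set `S` as soon as it maps `S` into that ideal.
For `S = ker(R)` this holds because `𝓛(p - q) = 𝓛p - 𝓛q` with `𝓛p R 𝓛q`.
Vanishing at `v₀` passes from the generators `p - q` to the ideal since evaluation
is a ring homomorphism.
-/

theorem Derivation.apply_mem_span_of_forall_mem {R A : Type*} [CommSemiring R] [CommRing A]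
    [Algebra R A] (D : Derivation R A A) {S : Set A} (hS : ∀ s ∈ S, D s ∈ Ideal.span S)
    {x : A} (hx : x ∈ Ideal.span S) : D x ∈ Ideal.span S := by
  induction hx using Submodule.span_induction with
  | mem s hs => exact hS s hs
  | zero => rw [map_zero]; exact Ideal.zero_mem _
  | add _ _ _ _ hDx hDy => rw [map_add]; exact Ideal.add_mem _ hDx hDy
  | smul a x hx hDx =>
    rw [smul_eq_mul, D.leibniz]
    exact Ideal.add_mem _ (Ideal.mul_mem_left _ _ hDx) (Ideal.mul_mem_right _ _ hx)

def relKernel {A : Type*} [Sub A] (R : A → A → Prop) : Set A :=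
  {r | ∃ p q, R p q ∧ r = p - q}

section LieDerivative

variable {N : ℕ} (F : Fin N → MvPolynomial (Fin N) ℝ)

noncomputable def lieDerivation :
    Derivation ℝ (MvPolynomial (Fin N) ℝ) (MvPolynomial (Fin N) ℝ) :=
  ∑ i, F i • pderiv i

theorem lieDerivation_apply (p : MvPolynomial (Fin N) ℝ) :
    lieDerivation F p = lieDeriv F p := by
  change Derivation.coeFnAddMonoidHom (∑ i, F i • pderiv i) p = _
  simp [map_sum, Derivation.coeFnAddMonoidHom, lieDeriv, mul_comm]

variable {F} {v₀ : Fin N → ℝ} {R : MvPolynomial (Fin N) ℝ → MvPolynomial (Fin N) ℝ → Prop}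

theorem IsLBisim.span_relKernel_le_ker_eval (hR : IsLBisim F v₀ R) :
    Ideal.span (relKernel R) ≤ RingHom.ker (eval v₀) := by
  rw [Ideal.span_le]
  rintro _ ⟨p, q, hpq, rfl⟩
  simp [RingHom.mem_ker, (hR p q hpq).1]

theorem IsLBisim.lieDeriv_mem_span_relKernel (hR : IsLBisim F v₀ R)
    {p : MvPolynomial (Fin N) ℝ} (hp : p ∈ Ideal.span (relKernel R)) :
    lieDeriv F p ∈ Ideal.span (relKernel R) := by
  rw [← lieDerivation_apply]
  refine (lieDerivation F).apply_mem_span_of_forall_mem ?_ hp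
  rintro _ ⟨p, q, hpq, rfl⟩
  rw [map_sub, lieDerivation_apply, lieDerivation_apply]
  exact Ideal.subset_span ⟨_, _, (hR p q hpq).2, rfl⟩

end LieDerivative

theorem stmt3_general
    (N : ℕ)
    (F : Fin N → MvPolynomial (Fin N) ℝ) (v₀ : Fin N → ℝ)
    (R : MvPolynomial (Fin N) ℝ → MvPolynomial (Fin N) ℝ → Prop)
    (hR : IsLBisim F v₀ R) :
    IsInvariantIdeal F v₀ (Ideal.span {r | ∃ p q, R p q ∧ r = p - q}) :=
  ⟨fun _ hp => hR.span_relKernel_le_ker_eval hp, fun _ hp => hR.lieDeriv_mem_span_relKernel hp⟩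

/-- if `R` is an 𝓛-bisimulation for `Φ`, then the ideal generated by
`ker(R) = {p − q : p R q}` is a `Φ`-invariant. -/
theorem stmt3
    (N : ℕ) (hN : 1 ≤ N)
    (F : Fin N → MvPolynomial (Fin N) ℝ) (v₀ : Fin N → ℝ)
    (R : MvPolynomial (Fin N) ℝ → MvPolynomial (Fin N) ℝ → Prop)
    (hR : IsLBisim F v₀ R) :
    IsInvariantIdeal F v₀ (Ideal.span {r | ∃ p q, R p q ∧ r = p - q}) :=
  stmt3_general N F v₀ R hR
end

section
/- Exact reduction: let W = span{x(t) : t ∈ D} ⊆ ℝ^N, let l = dim W, and let B be a real N×l matrix whose columns form an orthonormal basis of W (so B^T B = I_l and the column span of B equals W). Define y(t) = B^T x(t) for t ∈ D. Then y is differentiable on D with y′(t) = B^T F(B y(t)) for all t ∈ D and y(0) = B^T v₀; moreover x(t) = B y(t) for all t ∈ D, and consequently p(x(t)) = p(B y(t)) for every polynomial p ∈ ℝ[x] and every t ∈ D. -/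
open MvPolynomial Matrix

/- The trajectory stays in the column span `W` of `B`, on which `B Bᵀ` is the identity
because `Bᵀ B = 1`; so `x = B (Bᵀ x) = B y`, and differentiating `y = Bᵀ x` gives the
reduced equation. -/

theorem Matrix.mulVec_transpose_mulVec_of_mem_span {R m n : Type*} [CommRing R] [Fintype m]
    [Fintype n] [DecidableEq n] {B : Matrix m n R} (hB : Bᵀ * B = 1) {v : m → R}
    (hv : v ∈ Submodule.span R (Set.range Bᵀ)) : B *ᵥ (Bᵀ *ᵥ v) = v := by
  obtain ⟨c, rfl⟩ : v ∈ LinearMap.range B.mulVecLin := by rwa [range_mulVecLin]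
  simp only [mulVecLin_apply, mulVec_mulVec, hB, one_mulVec]

theorem HasDerivAt.const_mulVec {𝕜 m n : Type*} [NontriviallyNormedField 𝕜] [Fintype m]
    [Fintype n] (A : Matrix m n 𝕜) {x : 𝕜 → n → 𝕜} {x' : n → 𝕜} {t : 𝕜}
    (hx : HasDerivAt x x' t) : HasDerivAt (fun s => A *ᵥ x s) (A *ᵥ x') t :=
  hasDerivAt_pi.2 fun i => by
    simpa only [mulVec, dotProduct, Finset.sum_fn] using
      HasDerivAt.sum fun j _ => (hasDerivAt_pi.1 hx j).const_mul (A i j)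

theorem stmt14_general
    (N : ℕ)
    (F : Fin N → MvPolynomial (Fin N) ℝ) (v₀ : Fin N → ℝ)
    (D : Set ℝ)
    (x : ℝ → Fin N → ℝ)
    (hsol : ∀ t ∈ D, HasDerivAt x (fun i => eval (x t) (F i)) t)
    (hx0 : x 0 = v₀)
    (l : ℕ)
    (B : Matrix (Fin N) (Fin l) ℝ)
    (hortho : Bᵀ * B = 1)
    (hWspan : Submodule.span ℝ (Set.range Bᵀ) = Submodule.span ℝ (x '' D))
    (y : ℝ → Fin l → ℝ)
    (hy : ∀ t, y t = Bᵀ *ᵥ x t) :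
    (∀ t ∈ D, HasDerivAt y (Bᵀ *ᵥ fun i => eval (B *ᵥ y t) (F i)) t) ∧
    y 0 = Bᵀ *ᵥ v₀ ∧
    (∀ t ∈ D, x t = B *ᵥ y t) ∧
    (∀ p : MvPolynomial (Fin N) ℝ, ∀ t ∈ D, eval (x t) p = eval (B *ᵥ y t) p) := by
  have hxB : ∀ t ∈ D, x t = B *ᵥ y t := fun t ht => by
    rw [hy, mulVec_transpose_mulVec_of_mem_span hortho
      (hWspan ▸ Submodule.subset_span ⟨t, ht, rfl⟩)]
  refine ⟨fun t ht => ?_, by rw [hy, hx0], hxB, fun p t ht => by rw [hxB t ht]⟩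
  rw [← hxB t ht, funext hy]
  exact (hsol t ht).const_mulVec Bᵀ

/-- exact reduction: let `W = span{x(t) : t ∈ D}`, `l = dim W`, and
let `B` be an `N×l` matrix whose columns form an orthonormal basis of `W`. With
`y(t) = Bᵀ x(t)`, the function `y` solves the reduced problem
`y′ = Bᵀ F(B y)`, `y(0) = Bᵀ v₀`; moreover `x(t) = B y(t)` on `D` and hence
`p(x(t)) = p(B y(t))` for every polynomial `p`. -/
theorem stmt14
    (N : ℕ) (hN : 1 ≤ N)
    (F : Fin N → MvPolynomial (Fin N) ℝ) (v₀ : Fin N → ℝ)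
    (D : Set ℝ) (hD : IsOpen D) (hDc : D.OrdConnected) (h0 : (0 : ℝ) ∈ D)
    (x : ℝ → Fin N → ℝ)
    (hsol : ∀ t ∈ D, HasDerivAt x (fun i => eval (x t) (F i)) t)
    (hx0 : x 0 = v₀)
    (l : ℕ)
    (hl : l = Module.finrank ℝ (Submodule.span ℝ (x '' D)))
    (B : Matrix (Fin N) (Fin l) ℝ)
    (hortho : Bᵀ * B = 1)
    (hWspan : Submodule.span ℝ (Set.range Bᵀ) = Submodule.span ℝ (x '' D))
    (y : ℝ → Fin l → ℝ)
    (hy : ∀ t, y t = Bᵀ *ᵥ x t) :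
    (∀ t ∈ D, HasDerivAt y (Bᵀ *ᵥ fun i => eval (B *ᵥ y t) (F i)) t) ∧
    y 0 = Bᵀ *ᵥ v₀ ∧
    (∀ t ∈ D, x t = B *ᵥ y t) ∧
    (∀ p : MvPolynomial (Fin N) ℝ, ∀ t ∈ D, eval (x t) p = eval (B *ᵥ y t) p) :=
  stmt14_general N F v₀ D x hsol hx0 l B hortho hWspan y hy
end

section
/- Krylov projection lemma: let L be a real M×M matrix, φ ∈ ℝ^M, m ≥ 1, and let K_m = span{φ, L^Tφ, …, (L^T)^{m−1}φ} ⊆ ℝ^M. Let B be a real M×l matrix with orthonormal columns (B^T B = I_l) whose column span equals K_m, and set A = B^T L^T B. Then (L^T)^j φ = B A^j B^T φ for every 0 ≤ j ≤ m−1. -/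
/-!
Since `Bᵀ B = I`, the matrix `B Bᵀ` fixes every vector of the column span of `B`, which is the
Krylov space `K_m`. Induction on `j`:
`(Lᵀ)ʲ⁺¹ φ = B Bᵀ Lᵀ (Lᵀ)ʲ φ = B Bᵀ Lᵀ B Aʲ Bᵀ φ = B Aʲ⁺¹ Bᵀ φ`.
-/

open Matrix

namespace Matrix

variable {R m n : Type*} [CommSemiring R] [Fintype m] [Fintype n]

theorem mulVec_mulVec_eq_self_of_mem_span_col [DecidableEq n] {B : Matrix m n R}
    {C : Matrix n m R} (hCB : C * B = 1) {v : m → R}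
    (hv : v ∈ Submodule.span R (Set.range B.col)) :
    B *ᵥ (C *ᵥ v) = v := by
  rw [← range_mulVecLin] at hv
  obtain ⟨x, rfl⟩ := hv
  simp only [mulVecLin_apply, mulVec_mulVec, hCB, Matrix.mul_one]

theorem pow_mulVec_eq_mulVec_pow_mul_mul_mulVec [DecidableEq m] [DecidableEq n]
    {T : Matrix m m R} {B : Matrix m n R} {C : Matrix n m R} {φ : m → R} {k : ℕ}
    (hfix : ∀ j < k, B *ᵥ (C *ᵥ (T ^ j *ᵥ φ)) = T ^ j *ᵥ φ) :
    ∀ j < k, T ^ j *ᵥ φ = B *ᵥ ((C * T * B) ^ j *ᵥ (C *ᵥ φ)) := by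
  intro j hj
  induction j with
  | zero => simpa using (hfix 0 hj).symm
  | succ j ih =>
    calc T ^ (j + 1) *ᵥ φ
        = B *ᵥ (C *ᵥ (T *ᵥ (T ^ j *ᵥ φ))) := by
          rw [← hfix _ hj, pow_succ', ← mulVec_mulVec]
      _ = B *ᵥ ((C * T * B) ^ (j + 1) *ᵥ (C *ᵥ φ)) := by
        rw [ih (by omega), pow_succ']
        simp only [mulVec_mulVec, Matrix.mul_assoc]

end Matrix

theorem stmt17_general
    (M l : ℕ) (L : Matrix (Fin M) (Fin M) ℝ) (φ : Fin M → ℝ)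
    (m : ℕ)
    (B : Matrix (Fin M) (Fin l) ℝ)
    (hortho : Bᵀ * B = 1)
    (hKspan : Submodule.span ℝ (Set.range Bᵀ)
      = Submodule.span ℝ {w : Fin M → ℝ | ∃ j < m, w = (Lᵀ ^ j) *ᵥ φ})
    (A : Matrix (Fin l) (Fin l) ℝ)
    (hA : A = Bᵀ * Lᵀ * B) :
    ∀ j < m, (Lᵀ ^ j) *ᵥ φ = B *ᵥ ((A ^ j) *ᵥ (Bᵀ *ᵥ φ)) := by
  subst hA
  refine pow_mulVec_eq_mulVec_pow_mul_mul_mulVec (B := B) fun j hj ↦ ?_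
  have hmem : (Lᵀ ^ j) *ᵥ φ ∈ Submodule.span ℝ (Set.range Bᵀ) :=
    hKspan ▸ Submodule.subset_span ⟨j, hj, rfl⟩
  exact mulVec_mulVec_eq_self_of_mem_span_col hortho hmem

/-- Krylov projection lemma: let `K_m = span{φ, Lᵀφ, …, (Lᵀ)^{m−1}φ}`,
let `B` have orthonormal columns spanning `K_m`, and `A = Bᵀ Lᵀ B`. Then
`(Lᵀ)ʲ φ = B Aʲ Bᵀ φ` for every `0 ≤ j ≤ m−1`. -/
theorem stmt17
    (M l : ℕ) (L : Matrix (Fin M) (Fin M) ℝ) (φ : Fin M → ℝ)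
    (m : ℕ) (hm : 1 ≤ m)
    (B : Matrix (Fin M) (Fin l) ℝ)
    (hortho : Bᵀ * B = 1)
    (hKspan : Submodule.span ℝ (Set.range Bᵀ)
      = Submodule.span ℝ {w : Fin M → ℝ | ∃ j < m, w = (Lᵀ ^ j) *ᵥ φ})
    (A : Matrix (Fin l) (Fin l) ℝ)
    (hA : A = Bᵀ * Lᵀ * B) :
    ∀ j < m, (Lᵀ ^ j) *ᵥ φ = B *ᵥ ((A ^ j) *ᵥ (Bᵀ *ᵥ φ)) :=
  stmt17_general M l L φ m B hortho hKspan A hA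
end
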